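/- Let (X_t) be a stochastic process adapted to a filtration F_t, taking values in S ⊆ {0} ∪ [x_min, ∞) with x_min > 0 and 0 ∈ S, and let T = min{t : X_t = 0}. Let h : [x_min, ∞) → (0, ∞) be monotone increasing with E[X_t − X_{t+1} | F_t] ≥ h(X_t) for t < T. Then E[T | F_0] ≤ x_min/h(x_min) + ∫_{x_min}^{X_0} 1/h(x) dx. -/

import Mathlib

open MeasureTheory Set Filter Finset intervalIntegral
open scoped ENNReal

/-!
Take the potential `g x = xmin / h xmin + ∫_{xmin}^x 1 / h` on `[xmin, ∞)` and `g 0 = 0`. As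
`1 / h` is decreasing, `g` lies below its tangent lines at every state `x ≥ xmin` (at `y = 0`
because `xmin / h x ≤ xmin / h xmin`): `(x - y) / h x ≤ g x - g y`. Dividing the drift condition
by `h (X t)`, the process `g (X t)` thus loses at least `1` in conditional expectation per step
before `T`, and telescoping (additive drift) bounds `E[T; s] = ∑ₜ P(t < T, s)` by
`E[g (X 0); s]`.
-/

/-- First hitting time of state `0`, valued in `ℕ∞` (`⊤` if never hit). -/
noncomputable def hittingTimeZero {Ω : Type*} (X : ℕ → Ω → ℝ) (ω : Ω) : ℕ∞ :=
  ⨅ (t : ℕ) (_ : X t ω = 0), (t : ℕ∞)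

namespace AntitoneOn

variable {f : ℝ → ℝ} {a x y : ℝ}

theorem intervalIntegrable_of_mem_Ici (hf : AntitoneOn f (Ici a)) (hx : a ≤ x) (hy : a ≤ y) :
    IntervalIntegrable f volume x y :=
  (hf.mono fun _ hz => (le_inf hx hy).trans hz.1).intervalIntegrable

theorem intervalIntegral_le_sub_mul (hf : AntitoneOn f (Ici a)) (hy : a ≤ y) (hyx : y ≤ x) :
    ∫ z in y..x, f z ≤ (x - y) * f y := by
  calc ∫ z in y..x, f z ≤ ∫ _ in y..x, f y :=
        integral_mono_on hyx (hf.intervalIntegrable_of_mem_Ici hy (hy.trans hyx))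
          intervalIntegrable_const fun z hz => hf hy (hy.trans hz.1) hz.1
    _ = (x - y) * f y := by rw [intervalIntegral.integral_const, smul_eq_mul]

theorem sub_mul_le_intervalIntegral (hf : AntitoneOn f (Ici a)) (hx : a ≤ x) (hy : a ≤ y) :
    (x - y) * f x ≤ ∫ z in y..x, f z := by
  rcases le_total y x with hyx | hxy
  · calc (x - y) * f x = ∫ _ in y..x, f x := by rw [intervalIntegral.integral_const, smul_eq_mul]
      _ ≤ ∫ z in y..x, f z :=
        integral_mono_on hyx intervalIntegrable_const (hf.intervalIntegrable_of_mem_Ici hy hx)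
          fun z hz => hf (hy.trans hz.1) hx hz.2
  · rw [integral_symm, ← neg_sub, neg_mul, neg_le_neg_iff]
    exact hf.intervalIntegral_le_sub_mul hx hxy

end AntitoneOn

section Potential

variable {h : ℝ → ℝ} {xmin x y : ℝ}

noncomputable def driftPotential (h : ℝ → ℝ) (xmin x : ℝ) : ℝ :=
  if xmin ≤ x then xmin / h xmin + ∫ z in xmin..x, 1 / h z else 0

theorem antitoneOn_one_div (hpos : ∀ x, xmin ≤ x → 0 < h x) (hmono : MonotoneOn h (Ici xmin)) :
    AntitoneOn (fun z => 1 / h z) (Ici xmin) :=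
  fun _ hu _ hv huv => one_div_le_one_div_of_le (hpos _ hu) (hmono hu hv huv)

theorem driftPotential_zero (hxmin : 0 < xmin) : driftPotential h xmin 0 = 0 :=
  if_neg hxmin.not_ge

theorem ofReal_driftPotential_le (x : ℝ) :
    ENNReal.ofReal (driftPotential h xmin x)
      ≤ ENNReal.ofReal (xmin / h xmin + ∫ z in xmin..x, 1 / h z) := by
  rw [driftPotential]
  split_ifs
  · exact le_rfl
  · simp

variable (hxmin : 0 < xmin) (hpos : ∀ x, xmin ≤ x → 0 < h x) (hmono : MonotoneOn h (Ici xmin))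
include hxmin hpos hmono

theorem sub_div_le_driftPotential_sub (hx : xmin ≤ x) (hy : y = 0 ∨ xmin ≤ y) :
    (x - y) / h x ≤ driftPotential h xmin x - driftPotential h xmin y := by
  have hanti := antitoneOn_one_div hpos hmono
  rcases hy with rfl | hy
  · rw [driftPotential_zero hxmin, driftPotential, if_pos hx]
    have hint := hanti.sub_mul_le_intervalIntegral hx le_rfl
    have hfirst : xmin / h x ≤ xmin / h xmin :=
      div_le_div_of_nonneg_left hxmin.le (hpos xmin le_rfl) (hmono self_mem_Ici hx hx)
    calc (x - 0) / h x = xmin / h x + (x - xmin) * (1 / h x) := by ring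
      _ ≤ _ := by linarith
  · rw [driftPotential, driftPotential, if_pos hx, if_pos hy, add_sub_add_left_eq_sub,
      integral_interval_sub_left (hanti.intervalIntegrable_of_mem_Ici le_rfl hx)
        (hanti.intervalIntegrable_of_mem_Ici le_rfl hy), div_eq_mul_one_div]
    exact hanti.sub_mul_le_intervalIntegral hx hy

theorem driftPotential_nonneg (x : ℝ) : 0 ≤ driftPotential h xmin x := by
  by_cases hx : xmin ≤ x
  · have := sub_div_le_driftPotential_sub hxmin hpos hmono hx (Or.inl rfl)
    rw [driftPotential_zero hxmin, sub_zero, sub_zero] at this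
    exact (div_nonneg (hxmin.le.trans hx) (hpos x hx).le).trans this
  · rw [driftPotential, if_neg hx]

theorem driftPotential_mono : Monotone (driftPotential h xmin) := by
  intro x y hxy
  by_cases hx : xmin ≤ x
  · have := sub_div_le_driftPotential_sub hxmin hpos hmono (hx.trans hxy) (Or.inr hx)
    have : 0 ≤ (y - x) / h y := div_nonneg (sub_nonneg.2 hxy) (hpos y (hx.trans hxy)).le
    linarith
  · rw [driftPotential, if_neg hx]
    exact driftPotential_nonneg hxmin hpos hmono y

theorem driftPotential_le_div (hx : x = 0 ∨ xmin ≤ x) : driftPotential h xmin x ≤ x / h xmin := by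
  rcases hx with rfl | hx
  · rw [driftPotential_zero hxmin, zero_div]
  · rw [driftPotential, if_pos hx]
    have := (antitoneOn_one_div hpos hmono).intervalIntegral_le_sub_mul le_rfl hx
    calc _ ≤ xmin / h xmin + (x - xmin) * (1 / h xmin) := by linarith
      _ = x / h xmin := by ring

theorem integrable_driftPotential_comp {Ω : Type*} {m0 : MeasurableSpace Ω} {μ : Measure Ω}
    {f : Ω → ℝ} (hf : Integrable f μ) (hfx : ∀ ω, f ω = 0 ∨ xmin ≤ f ω) :
    Integrable (fun ω => driftPotential h xmin (f ω)) μ := by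
  refine (hf.div_const (h xmin)).mono
    ((driftPotential_mono hxmin hpos hmono).measurable.comp_aemeasurable
      hf.aemeasurable).aestronglyMeasurable (ae_of_all _ fun ω => ?_)
  rw [Real.norm_of_nonneg (driftPotential_nonneg hxmin hpos hmono _)]
  exact (driftPotential_le_div hxmin hpos hmono (hfx ω)).trans (Real.le_norm_self _)

end Potential

section CondExp

variable {Ω : Type*} {m m0 : MeasurableSpace Ω} {μ : Measure Ω} [IsFiniteMeasure μ]
  {s : Set Ω} {w d : Ω → ℝ} {C : ℝ}

theorem setIntegral_mul_condExp (hm : m ≤ m0) (hs : MeasurableSet[m] s)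
    (hw : StronglyMeasurable[m] w) (hwC : ∀ ω, ‖w ω‖ ≤ C) (hd : Integrable d μ) :
    ∫ ω in s, w ω * μ[d | m] ω ∂μ = ∫ ω in s, w ω * d ω ∂μ := by
  calc ∫ ω in s, w ω * μ[d | m] ω ∂μ = ∫ ω in s, μ[w * d | m] ω ∂μ :=
        setIntegral_congr_ae (hm s hs) <| by
          filter_upwards [condExp_stronglyMeasurable_mul_of_bound hm hw hd C
            (Eventually.of_forall hwC)] with ω hω _ using hω.symm
    _ = ∫ ω in s, w ω * d ω ∂μ :=
        setIntegral_condExp hm (hd.bdd_mul (hw.mono hm).aestronglyMeasurable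
          (Eventually.of_forall hwC)) hs

theorem measureReal_le_setIntegral_mul_of_one_le_mul_condExp (hm : m ≤ m0)
    (hs : MeasurableSet[m] s) (hw : StronglyMeasurable[m] w) (hwC : ∀ ω, ‖w ω‖ ≤ C)
    (hd : Integrable d μ) (hdrift : ∀ᵐ ω ∂μ, ω ∈ s → 1 ≤ w ω * μ[d | m] ω) :
    μ.real s ≤ ∫ ω in s, w ω * d ω ∂μ := by
  rw [← setIntegral_mul_condExp hm hs hw hwC hd]
  calc μ.real s = ∫ _ in s, (1 : ℝ) ∂μ := by rw [setIntegral_const, smul_eq_mul, mul_one]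
    _ ≤ ∫ ω in s, w ω * μ[d | m] ω ∂μ :=
      setIntegral_mono_on_ae (integrableOn_const (measure_ne_top μ s))
        (integrable_condExp.bdd_mul (hw.mono hm).aestronglyMeasurable
          (Eventually.of_forall hwC)).integrableOn (hm s hs) hdrift

end CondExp

theorem ENat.toENNReal_eq_tsum_ite_lt (m : ℕ∞) :
    (m : ℝ≥0∞) = ∑' t : ℕ, if (t : ℕ∞) < m then 1 else 0 := by
  induction m using ENat.recTopCoe with
  | top => simp
  | coe n =>
    simp only [Nat.cast_lt, ENat.toENNReal_coe]
    rw [tsum_eq_sum (s := range n) fun t ht => if_neg (by simpa using ht)]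
    rw [Finset.sum_ite_of_true fun t ht => Finset.mem_range.mp ht]
    simp

theorem setLIntegral_toENNReal_eq_tsum_measure_lt_inter {Ω : Type*} {m0 : MeasurableSpace Ω}
    {μ : Measure Ω} {T : Ω → ℕ∞} (hT : ∀ t : ℕ, MeasurableSet {ω | (t : ℕ∞) < T ω})
    (s : Set Ω) :
    ∫⁻ ω in s, (T ω : ℝ≥0∞) ∂μ = ∑' t : ℕ, μ ({ω | (t : ℕ∞) < T ω} ∩ s) := by
  simp_rw [ENat.toENNReal_eq_tsum_ite_lt]
  rw [lintegral_tsum fun t => (measurable_const.ite (hT t) measurable_const).aemeasurable]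
  refine tsum_congr fun t => ?_
  rw [← Measure.restrict_apply (hT t), ← lintegral_indicator_one (hT t)]
  simp only [indicator_apply, mem_ofPred_eq, Pi.one_apply]

theorem tsum_measure_le_ofReal_setIntegral_of_step {Ω : Type*} {m0 : MeasurableSpace Ω}
    {μ : Measure Ω} [IsFiniteMeasure μ] {Y : ℕ → Ω → ℝ} {A : ℕ → Set Ω} (hA : Antitone A)
    (hAm : ∀ t, MeasurableSet (A t)) (hY : ∀ t, Integrable (Y t) μ) (hY0 : ∀ t ω, 0 ≤ Y t ω)
    (hstep : ∀ t, μ.real (A t) + ∫ ω in A t, Y (t + 1) ω ∂μ ≤ ∫ ω in A t, Y t ω ∂μ) :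
    ∑' t, μ (A t) ≤ ENNReal.ofReal (∫ ω in A 0, Y 0 ω ∂μ) := by
  have hpartial : ∀ n, ∑ t ∈ range n, μ.real (A t) + ∫ ω in A n, Y n ω ∂μ
      ≤ ∫ ω in A 0, Y 0 ω ∂μ := by
    intro n
    induction n with
    | zero => simp
    | succ n ih =>
      have hshrink : ∫ ω in A (n + 1), Y (n + 1) ω ∂μ ≤ ∫ ω in A n, Y (n + 1) ω ∂μ :=
        setIntegral_mono_set (hY _).integrableOn (ae_of_all _ (hY0 _))
          (hA n.le_succ).eventuallyLE
      rw [sum_range_succ]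
      linarith [hstep n]
  rw [ENNReal.tsum_eq_iSup_nat]
  refine iSup_le fun n => ?_
  have hlast : 0 ≤ ∫ ω in A n, Y n ω ∂μ := setIntegral_nonneg (hAm n) fun ω _ => hY0 n ω
  calc ∑ t ∈ range n, μ (A t) = ENNReal.ofReal (∑ t ∈ range n, μ.real (A t)) := by
        rw [ENNReal.ofReal_sum_of_nonneg fun _ _ => measureReal_nonneg]
        exact sum_congr rfl fun t _ => (ofReal_measureReal (measure_ne_top μ _)).symm
    _ ≤ _ := ENNReal.ofReal_le_ofReal (by linarith [hpartial n])

theorem lt_hittingTimeZero_iff {Ω : Type*} {X : ℕ → Ω → ℝ} {ω : Ω} {t : ℕ} :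
    (t : ℕ∞) < hittingTimeZero X ω ↔ ∀ k ≤ t, X k ω ≠ 0 := by
  rw [← ENat.add_one_le_iff (ENat.natCast_ne_top t), hittingTimeZero, le_iInf₂_iff]
  refine forall_congr' fun k => ?_
  norm_cast
  grind

theorem measurableSet_lt_hittingTimeZero {Ω : Type*} {m0 : MeasurableSpace Ω}
    {ℱ : Filtration ℕ m0} {X : ℕ → Ω → ℝ} (hX : Adapted ℱ X) (t : ℕ) :
    MeasurableSet[ℱ t] {ω | (t : ℕ∞) < hittingTimeZero X ω} := by
  simp_rw [lt_hittingTimeZero_iff, ofPred_forall]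
  exact .iInter fun k => .iInter fun hk =>
    (hX k).mono (ℱ.mono hk) le_rfl (measurableSet_singleton 0).compl

section DriftProcess

variable {Ω : Type*} {m0 : MeasurableSpace Ω} {μ : Measure Ω} [IsFiniteMeasure μ]
  {ℱ : Filtration ℕ m0} {X : ℕ → Ω → ℝ} {xmin : ℝ} {h : ℝ → ℝ}
  (hX : Adapted ℱ X) (hint : ∀ t, Integrable (X t) μ) (hxmin : 0 < xmin)
  (hstate : ∀ t ω, X t ω = 0 ∨ xmin ≤ X t ω) (hpos : ∀ x, xmin ≤ x → 0 < h x)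
  (hmono : MonotoneOn h (Ici xmin))
include hX hint hxmin hstate hpos hmono

theorem measureReal_add_setIntegral_driftPotential_le {t : ℕ} {B : Set Ω}
    (hB : MeasurableSet[ℱ t] B) (hBX : ∀ ω ∈ B, xmin ≤ X t ω)
    (hdrift : ∀ᵐ ω ∂μ, ω ∈ B → h (X t ω) ≤ μ[fun ω => X t ω - X (t + 1) ω | ℱ t] ω) :
    μ.real B + ∫ ω in B, driftPotential h xmin (X (t + 1) ω) ∂μ
      ≤ ∫ ω in B, driftPotential h xmin (X t ω) ∂μ := by
  set g := driftPotential h xmin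
  -- `h` itself need not be measurable, but `h ∘ max xmin` is monotone
  set w : Ω → ℝ := fun ω => 1 / h (max xmin (X t ω))
  have hw : StronglyMeasurable[ℱ t] w := by
    have hmax : Monotone fun x => h (max xmin x) := fun _ _ hab =>
      hmono (le_max_left xmin _) (le_max_left xmin _) (max_le_max le_rfl hab)
    exact ((hmax.measurable.comp (hX t)).const_div 1).stronglyMeasurable
  have hwC : ∀ ω, ‖w ω‖ ≤ 1 / h xmin := fun ω => by
    have hpos' := hpos _ (le_max_left xmin (X t ω))
    rw [Real.norm_of_nonneg (one_div_pos.2 hpos').le]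
    exact one_div_le_one_div_of_le (hpos xmin le_rfl) (hmono self_mem_Ici (le_max_left xmin _)
      (le_max_left xmin _))
  have hw_eq : ∀ ω ∈ B, w ω = 1 / h (X t ω) := fun ω hω => by
    simp only [w, max_eq_right (hBX ω hω)]
  have hd : Integrable (fun ω => X t ω - X (t + 1) ω) μ := (hint t).sub (hint (t + 1))
  have hgX : ∀ k, Integrable (fun ω => g (X k ω)) μ := fun k =>
    integrable_driftPotential_comp hxmin hpos hmono (hint k) (hstate k)
  have hmeasure : μ.real B ≤ ∫ ω in B, w ω * (X t ω - X (t + 1) ω) ∂μ :=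
    measureReal_le_setIntegral_mul_of_one_le_mul_condExp (ℱ.le t) hB hw hwC hd <| by
      filter_upwards [hdrift] with ω hω hωB
      rw [hw_eq ω hωB, one_div_mul_eq_div, one_le_div (hpos _ (hBX ω hωB))]
      exact hω hωB
  have hpotential : ∫ ω in B, w ω * (X t ω - X (t + 1) ω) ∂μ
      ≤ ∫ ω in B, (g (X t ω) - g (X (t + 1) ω)) ∂μ :=
    setIntegral_mono_on (hd.bdd_mul (hw.mono (ℱ.le t)).aestronglyMeasurable
        (ae_of_all _ hwC)).integrableOn ((hgX t).sub (hgX (t + 1))).integrableOn (ℱ.le t B hB)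
      fun ω hω => by
        rw [hw_eq ω hω, one_div_mul_eq_div]
        exact sub_div_le_driftPotential_sub hxmin hpos hmono (hBX ω hω) (hstate (t + 1) ω)
  rw [integral_sub (hgX t).integrableOn (hgX (t + 1)).integrableOn] at hpotential
  linarith

theorem tsum_measure_lt_hittingTimeZero_inter_le
    (hdrift : ∀ t : ℕ, ∀ᵐ ω ∂μ, (t : ℕ∞) < hittingTimeZero X ω →
      h (X t ω) ≤ μ[fun ω => X t ω - X (t + 1) ω | ℱ t] ω)
    {s : Set Ω} (hs : MeasurableSet[ℱ 0] s) :
    ∑' t : ℕ, μ ({ω | (t : ℕ∞) < hittingTimeZero X ω} ∩ s)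
      ≤ ENNReal.ofReal (∫ ω in s, driftPotential h xmin (X 0 ω) ∂μ) := by
  set A : ℕ → Set Ω := fun t => {ω | (t : ℕ∞) < hittingTimeZero X ω} ∩ s
  have hA : ∀ t, MeasurableSet[ℱ t] (A t) := fun t =>
    (measurableSet_lt_hittingTimeZero hX t).inter (ℱ.mono t.zero_le s hs)
  have hA_anti : Antitone A := fun _ _ hab =>
    inter_subset_inter_left s fun _ hω => mem_ofPred.2 ((Nat.cast_le.2 hab).trans_lt hω)
  have hg0 : ∀ x, 0 ≤ driftPotential h xmin x := driftPotential_nonneg hxmin hpos hmono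
  have hgX : ∀ t, Integrable (fun ω => driftPotential h xmin (X t ω)) μ := fun t =>
    integrable_driftPotential_comp hxmin hpos hmono (hint t) (hstate t)
  have hstep : ∀ t, μ.real (A t) + ∫ ω in A t, driftPotential h xmin (X (t + 1) ω) ∂μ
      ≤ ∫ ω in A t, driftPotential h xmin (X t ω) ∂μ := fun t =>
    measureReal_add_setIntegral_driftPotential_le hX hint hxmin hstate hpos hmono (hA t)
      (fun ω hω => (hstate t ω).resolve_left (lt_hittingTimeZero_iff.mp hω.1 t le_rfl))
      (by filter_upwards [hdrift t] with ω hω hωA using hω hωA.1)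
  calc ∑' t, μ (A t) ≤ ENNReal.ofReal (∫ ω in A 0, driftPotential h xmin (X 0 ω) ∂μ) :=
        tsum_measure_le_ofReal_setIntegral_of_step hA_anti (fun t => ℱ.le t _ (hA t)) hgX
          (fun _ _ => hg0 _) hstep
    _ ≤ ENNReal.ofReal (∫ ω in s, driftPotential h xmin (X 0 ω) ∂μ) :=
        ENNReal.ofReal_le_ofReal <| setIntegral_mono_set (hgX 0).integrableOn
          (ae_of_all _ fun _ => hg0 _) inter_subset_right.eventuallyLE

end DriftProcess

/-- Variable drift theorem, upper bound: the process lives on `{0} ∪ [xmin, ∞)`,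
`h` is positive and monotone increasing on `[xmin, ∞)`, and the drift towards `0`
is at least `h (X t)` on the event `t < T`. Then
`E[T | ℱ 0] ≤ xmin / h xmin + ∫_{xmin}^{X 0} 1 / h x dx`
(stated via set integrals over `ℱ 0`-measurable sets). -/
theorem variable_drift_upper
    {Ω : Type*} {m0 : MeasurableSpace Ω} {μ : Measure Ω} [IsProbabilityMeasure μ]
    (ℱ : Filtration ℕ m0) (X : ℕ → Ω → ℝ)
    (hadapted : Adapted ℱ X)
    (xmin : ℝ) (hxmin : 0 < xmin)
    (hstate : ∀ t ω, X t ω = 0 ∨ xmin ≤ X t ω)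
    (hint : ∀ t, Integrable (X t) μ)
    (h : ℝ → ℝ)
    (hpos : ∀ x, xmin ≤ x → 0 < h x)
    (hmono : ∀ x y, xmin ≤ x → x ≤ y → h x ≤ h y)
    (hdrift : ∀ t : ℕ, ∀ᵐ ω ∂μ,
      (t : ℕ∞) < hittingTimeZero X ω →
        h (X t ω) ≤ (μ[fun ω => X t ω - X (t + 1) ω | ℱ t]) ω) :
    ∀ s : Set Ω, MeasurableSet[ℱ 0] s →
      ∫⁻ ω in s, (hittingTimeZero X ω : ENNReal) ∂μ
        ≤ ∫⁻ ω in s,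
            ENNReal.ofReal (xmin / h xmin + ∫ x in xmin..(X 0 ω), 1 / h x) ∂μ := by
  intro s hs
  have hmono' : MonotoneOn h (Ici xmin) := fun x hx _ _ hxy => hmono x _ hx hxy
  have hg0 : ∀ x, 0 ≤ driftPotential h xmin x := driftPotential_nonneg hxmin hpos hmono'
  have hg0X : Integrable (fun ω => driftPotential h xmin (X 0 ω)) μ :=
    integrable_driftPotential_comp hxmin hpos hmono' (hint 0) (hstate 0)
  calc ∫⁻ ω in s, (hittingTimeZero X ω : ENNReal) ∂μ
        = ∑' t : ℕ, μ ({ω | (t : ℕ∞) < hittingTimeZero X ω} ∩ s) :=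
        setLIntegral_toENNReal_eq_tsum_measure_lt_inter
          (fun t => ℱ.le t _ (measurableSet_lt_hittingTimeZero hadapted t)) s
    _ ≤ ENNReal.ofReal (∫ ω in s, driftPotential h xmin (X 0 ω) ∂μ) :=
        tsum_measure_lt_hittingTimeZero_inter_le hadapted hint hxmin hstate hpos hmono' hdrift hs
    _ = ∫⁻ ω in s, ENNReal.ofReal (driftPotential h xmin (X 0 ω)) ∂μ :=
        ofReal_integral_eq_lintegral_ofReal hg0X.integrableOn (ae_of_all _ fun _ => hg0 _)
    _ ≤ _ := lintegral_mono fun ω => ofReal_driftPotential_le (X 0 ω)
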